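/- arXiv:0907.3312 — 2 statements merged into one kernel-verified Lean document; each statement's English description precedes it below -/
import Mathlib

section
/- For all n×n matrices A and B with non-negative real entries, ρ(A∘B)² ≤ ρ((A∘A)(B∘B)), where ρ denotes the spectral radius and ∘ the Hadamard product. -/
/-!
Write `X = A ∘ B`, `C = (A ∘ A)(B ∘ B)`, `D = (B ∘ B)(A ∘ A)`, and let `G(P, Q)` be the entrywise
geometric mean `G(P, Q)ᵢⱼ = √(Pᵢⱼ Qᵢⱼ)`. For non-negative matrices, Cauchy–Schwarz in each entry
gives `G(P, Q) G(P', Q') ≤ G(PP', QQ')` entrywise. Since `X = G(A ∘ A, B ∘ B) = G(B ∘ B, A ∘ A)`,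
iterating yields `X^(2k) ≤ G(Cᵏ, Dᵏ)` entrywise, hence `‖X^(2k)‖² ≤ ‖Cᵏ‖ ‖Dᵏ‖` for the
max-row-sum norm. Gelfand's formula turns this into `ρ(X)⁴ ≤ ρ(C) ρ(D)`, and `ρ(D) = ρ(C)`
because `PQ` and `QP` have the same non-zero spectrum.
-/

open Matrix Filter

/-- The spectral radius of a real square matrix: the largest modulus of its
complex eigenvalues, i.e. the supremum of the moduli of the elements of the
spectrum of the matrix viewed as a complex matrix. -/
noncomputable def specRad {n : ℕ} (A : Matrix (Fin n) (Fin n) ℝ) : ℝ :=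
  sSup {r : ℝ | ∃ μ ∈ spectrum ℂ (A.map (fun a => (a : ℂ))), ‖μ‖ = r}

open scoped NNReal ENNReal

section SpectralRadius

variable {𝕜 A : Type*}

lemma spectralRadius_mul_comm_le [NormedField 𝕜] [Ring A] [Algebra 𝕜 A] (a b : A) :
    spectralRadius 𝕜 (a * b) ≤ spectralRadius 𝕜 (b * a) := by
  refine iSup₂_le fun k hk => ?_
  rcases eq_or_ne k 0 with rfl | hk0
  · simp
  · have hk' : k ∈ spectrum 𝕜 (a * b) \ {0} := ⟨hk, hk0⟩
    rw [spectrum.nonzero_mul_comm] at hk'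
    exact le_iSup₂ (α := ℝ≥0∞) k hk'.1

lemma spectralRadius_mul_comm [NormedField 𝕜] [Ring A] [Algebra 𝕜 A] (a b : A) :
    spectralRadius 𝕜 (a * b) = spectralRadius 𝕜 (b * a) :=
  (spectralRadius_mul_comm_le a b).antisymm (spectralRadius_mul_comm_le b a)

variable [NontriviallyNormedField 𝕜] [ProperSpace 𝕜] [NormedRing A] [NormedAlgebra 𝕜 A]
  [CompleteSpace A]

lemma spectralRadius_ne_top (a : A) : spectralRadius 𝕜 a ≠ ∞ := by
  rcases (spectrum 𝕜 a).eq_empty_or_nonempty with h | h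
  · simp [spectralRadius, h]
  · obtain ⟨k, -, hk⟩ := spectrum.exists_nnnorm_eq_spectralRadius_of_nonempty h
    exact hk ▸ ENNReal.coe_ne_top

lemma sSup_norm_spectrum_eq_toReal_spectralRadius (a : A) :
    sSup ((‖·‖) '' spectrum 𝕜 a) = (spectralRadius 𝕜 a).toReal := by
  rcases (spectrum 𝕜 a).eq_empty_or_nonempty with h | h
  · simp [spectralRadius, h]
  · obtain ⟨k, hk, hρ⟩ := spectrum.exists_nnnorm_eq_spectralRadius_of_nonempty h
    rw [← hρ, ENNReal.coe_toReal, coe_nnnorm]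
    refine IsGreatest.csSup_eq ⟨⟨k, hk, rfl⟩, ?_⟩
    rintro _ ⟨μ, hμ, rfl⟩
    have : (‖μ‖₊ : ℝ≥0∞) ≤ ‖k‖₊ := hρ ▸ le_iSup₂ (α := ℝ≥0∞) μ hμ
    exact_mod_cast this

end SpectralRadius

lemma spectralRadius_pow_four_le_mul {A : Type*} [NormedRing A] [NormedAlgebra ℂ A]
    [CompleteSpace A] {x c d : A} (h : ∀ m, ‖x ^ (2 * m)‖ ^ 2 ≤ ‖c ^ m‖ * ‖d ^ m‖) :
    spectralRadius ℂ x ^ 4 ≤ spectralRadius ℂ c * spectralRadius ℂ d := by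
  have hx := (spectrum.pow_nnnorm_pow_one_div_tendsto_nhds_spectralRadius x).comp
    (tendsto_id.const_mul_atTop' two_pos)
  have hcd := ENNReal.Tendsto.mul
    (spectrum.pow_nnnorm_pow_one_div_tendsto_nhds_spectralRadius c)
    (Or.inr (spectralRadius_ne_top d))
    (spectrum.pow_nnnorm_pow_one_div_tendsto_nhds_spectralRadius d)
    (Or.inr (spectralRadius_ne_top c))
  refine le_of_tendsto_of_tendsto' (ENNReal.Tendsto.pow hx) hcd fun m => ?_
  have hm : (‖x ^ (2 * m)‖₊ : ℝ≥0∞) ^ 2 ≤ ‖c ^ m‖₊ * ‖d ^ m‖₊ := by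
    exact_mod_cast (h m : _)
  calc ((‖x ^ (2 * m)‖₊ : ℝ≥0∞) ^ (1 / ((2 * m : ℕ) : ℝ))) ^ 4
      = ((‖x ^ (2 * m)‖₊ : ℝ≥0∞) ^ 2) ^ (1 / (m : ℝ)) := by
        rw [← ENNReal.rpow_natCast, ← ENNReal.rpow_mul, ← ENNReal.rpow_two, ← ENNReal.rpow_mul]
        congr 1
        push_cast
        ring
    _ ≤ ((‖c ^ m‖₊ : ℝ≥0∞) * ‖d ^ m‖₊) ^ (1 / (m : ℝ)) := by gcongr
    _ = _ := ENNReal.mul_rpow_of_nonneg _ _ (by positivity)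

namespace Matrix

section LinftyOpNorm

attribute [local instance] Matrix.linftyOpNormedAddCommGroup

variable {m n α β : Type*} [Fintype m] [Fintype n] [NormedAddCommGroup α] [NormedAddCommGroup β]

lemma sum_norm_le_linfty_opNorm (M : Matrix m n α) (i : m) : ∑ j, ‖M i j‖ ≤ ‖M‖ := by
  simpa [← NNReal.coe_le_coe, ← linfty_opNNNorm_def] using
    Finset.le_sup (f := fun i => ∑ j, ‖M i j‖₊) (Finset.mem_univ i)

lemma linfty_opNorm_le_of_forall_sum_le {M : Matrix m n α} {r : ℝ} (hr : 0 ≤ r)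
    (h : ∀ i, ∑ j, ‖M i j‖ ≤ r) : ‖M‖ ≤ r := by
  lift r to ℝ≥0 using hr
  rw [← coe_nnnorm, NNReal.coe_le_coe, linfty_opNNNorm_def]
  exact Finset.sup_le fun i _ => by simpa [← NNReal.coe_le_coe] using h i

lemma linfty_opNorm_mono {M : Matrix m n α} {N : Matrix m n β} (h : ∀ i j, ‖M i j‖ ≤ ‖N i j‖) :
    ‖M‖ ≤ ‖N‖ :=
  linfty_opNorm_le_of_forall_sum_le (norm_nonneg _) fun i =>
    (Finset.sum_le_sum fun j _ => h i j).trans (sum_norm_le_linfty_opNorm N i)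

lemma linfty_opNorm_map_ofReal (M : Matrix m n ℝ) : ‖M.map ((↑) : ℝ → ℂ)‖ = ‖M‖ :=
  (linfty_opNorm_mono fun i j => by simp).antisymm (linfty_opNorm_mono fun i j => by simp)

end LinftyOpNorm

section Nonneg

variable {m n α : Type*} [Semiring α] [PartialOrder α] [IsOrderedRing α]

lemma hadamard_apply_nonneg {A B : Matrix m n α} (hA : ∀ i j, 0 ≤ A i j)
    (hB : ∀ i j, 0 ≤ B i j) (i : m) (j : n) : 0 ≤ (A ⊙ B) i j :=
  mul_nonneg (hA i j) (hB i j)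

variable [Fintype n]

lemma mul_apply_nonneg {P Q : Matrix n n α} (hP : ∀ i j, 0 ≤ P i j) (hQ : ∀ i j, 0 ≤ Q i j)
    (i j : n) : 0 ≤ (P * Q) i j :=
  Finset.sum_nonneg fun k _ => mul_nonneg (hP i k) (hQ k j)

lemma mul_apply_le_mul_apply {P P' Q Q' : Matrix n n α} (hP : ∀ i j, 0 ≤ P i j)
    (hQ : ∀ i j, 0 ≤ Q i j) (hPP' : ∀ i j, P i j ≤ P' i j) (hQQ' : ∀ i j, Q i j ≤ Q' i j)
    (i j : n) : (P * Q) i j ≤ (P' * Q') i j :=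
  Finset.sum_le_sum fun k _ =>
    mul_le_mul (hPP' i k) (hQQ' k j) (hQ k j) ((hP i k).trans (hPP' i k))

lemma pow_apply_le_pow_apply [DecidableEq n] {P Q : Matrix n n α} (hP : ∀ i j, 0 ≤ P i j)
    (hPQ : ∀ i j, P i j ≤ Q i j) (k : ℕ) (i j : n) : (P ^ k) i j ≤ (Q ^ k) i j := by
  induction k generalizing i j with
  | zero => rfl
  | succ k ih =>
    rw [pow_succ, pow_succ]
    exact mul_apply_le_mul_apply (pow_apply_nonneg hP k) hP ih hPQ i j

end Nonneg

section HadamardGeomMean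

variable {l m n : Type*}

noncomputable def hadamardGeomMean (P Q : Matrix m n ℝ) : Matrix m n ℝ :=
  of fun i j => √(P i j * Q i j)

@[simp]
lemma hadamardGeomMean_apply (P Q : Matrix m n ℝ) (i : m) (j : n) :
    hadamardGeomMean P Q i j = √(P i j * Q i j) := rfl

lemma hadamardGeomMean_nonneg (P Q : Matrix m n ℝ) (i : m) (j : n) :
    0 ≤ hadamardGeomMean P Q i j :=
  Real.sqrt_nonneg _

lemma hadamardGeomMean_hadamard_self {A B : Matrix m n ℝ} (hA : ∀ i j, 0 ≤ A i j)
    (hB : ∀ i j, 0 ≤ B i j) : hadamardGeomMean (A ⊙ A) (B ⊙ B) = A ⊙ B := by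
  ext i j
  rw [hadamardGeomMean_apply, hadamard_apply, hadamard_apply, hadamard_apply,
    mul_mul_mul_comm, Real.sqrt_mul_self (mul_nonneg (hA i j) (hB i j))]

lemma hadamardGeomMean_mul_apply_le [Fintype m] {P Q : Matrix l m ℝ} {P' Q' : Matrix m n ℝ}
    (hP : ∀ i j, 0 ≤ P i j) (hQ : ∀ i j, 0 ≤ Q i j) (hP' : ∀ i j, 0 ≤ P' i j)
    (hQ' : ∀ i j, 0 ≤ Q' i j) (i : l) (j : n) :
    (hadamardGeomMean P Q * hadamardGeomMean P' Q') i j ≤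
      hadamardGeomMean (P * P') (Q * Q') i j := by
  have hterm : ∀ k, √(P i k * Q i k) * √(P' k j * Q' k j) =
      √(P i k * P' k j) * √(Q i k * Q' k j) := fun k => by
    rw [← Real.sqrt_mul (mul_nonneg (hP i k) (hQ i k)),
      ← Real.sqrt_mul (mul_nonneg (hP i k) (hP' k j))]
    congr 1
    ring
  calc (hadamardGeomMean P Q * hadamardGeomMean P' Q') i j
      = ∑ k, √(P i k * P' k j) * √(Q i k * Q' k j) := by
        simp only [mul_apply, hadamardGeomMean_apply, hterm]
    _ ≤ √(∑ k, P i k * P' k j) * √(∑ k, Q i k * Q' k j) :=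
        Real.sum_sqrt_mul_sqrt_le _ (fun k => mul_nonneg (hP i k) (hP' k j))
          (fun k => mul_nonneg (hQ i k) (hQ' k j))
    _ = hadamardGeomMean (P * P') (Q * Q') i j := by
        rw [hadamardGeomMean_apply, mul_apply, mul_apply,
          Real.sqrt_mul (Finset.sum_nonneg fun k _ => mul_nonneg (hP i k) (hP' k j))]

lemma hadamardGeomMean_one [DecidableEq n] :
    hadamardGeomMean (1 : Matrix n n ℝ) 1 = 1 := by
  ext i j
  by_cases h : i = j <;> simp [one_apply, h]

lemma hadamardGeomMean_pow_apply_le [Fintype n] [DecidableEq n] {P Q : Matrix n n ℝ}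
    (hP : ∀ i j, 0 ≤ P i j) (hQ : ∀ i j, 0 ≤ Q i j) (k : ℕ) (i j : n) :
    (hadamardGeomMean P Q ^ k) i j ≤ hadamardGeomMean (P ^ k) (Q ^ k) i j := by
  induction k generalizing i j with
  | zero => rw [pow_zero, pow_zero, pow_zero, hadamardGeomMean_one]
  | succ k ih =>
    calc (hadamardGeomMean P Q ^ (k + 1)) i j
        ≤ (hadamardGeomMean (P ^ k) (Q ^ k) * hadamardGeomMean P Q) i j := by
          rw [pow_succ]
          exact mul_apply_le_mul_apply (pow_apply_nonneg (hadamardGeomMean_nonneg P Q) k)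
            (hadamardGeomMean_nonneg P Q) ih (fun _ _ => le_rfl) i j
      _ ≤ hadamardGeomMean (P ^ (k + 1)) (Q ^ (k + 1)) i j := by
          rw [pow_succ, pow_succ]
          exact hadamardGeomMean_mul_apply_le (pow_apply_nonneg hP k) (pow_apply_nonneg hQ k)
            hP hQ i j

section LinftyOpNorm

attribute [local instance] Matrix.linftyOpNormedAddCommGroup

lemma linfty_opNorm_hadamardGeomMean_sq_le [Fintype m] [Fintype n] {P Q : Matrix m n ℝ}
    (hP : ∀ i j, 0 ≤ P i j) (hQ : ∀ i j, 0 ≤ Q i j) :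
    ‖hadamardGeomMean P Q‖ ^ 2 ≤ ‖P‖ * ‖Q‖ := by
  have hrow : ∀ (M : Matrix m n ℝ) i, ∑ j, M i j ≤ ‖M‖ := fun M i =>
    (Finset.sum_le_sum fun j _ => Real.le_norm_self (M i j)).trans (sum_norm_le_linfty_opNorm M i)
  rw [← Real.le_sqrt (norm_nonneg _) (by positivity)]
  refine linfty_opNorm_le_of_forall_sum_le (Real.sqrt_nonneg _) fun i => ?_
  calc ∑ j, ‖hadamardGeomMean P Q i j‖ = ∑ j, √(P i j) * √(Q i j) :=
        Finset.sum_congr rfl fun j _ => by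
          rw [Real.norm_of_nonneg (hadamardGeomMean_nonneg P Q i j), hadamardGeomMean_apply,
            Real.sqrt_mul (hP i j)]
    _ ≤ √(∑ j, P i j) * √(∑ j, Q i j) := Real.sum_sqrt_mul_sqrt_le _ (hP i) (hQ i)
    _ ≤ √‖P‖ * √‖Q‖ := by gcongr <;> exact hrow _ i
    _ = √(‖P‖ * ‖Q‖) := (Real.sqrt_mul (norm_nonneg _) _).symm

end LinftyOpNorm

end HadamardGeomMean

section Hadamard

variable {n : Type*} [Fintype n] [DecidableEq n] {A B : Matrix n n ℝ}

lemma hadamard_sq_apply_le (hA : ∀ i j, 0 ≤ A i j) (hB : ∀ i j, 0 ≤ B i j) (i j : n) :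
    ((A ⊙ B) ^ 2) i j ≤ hadamardGeomMean (A ⊙ A * (B ⊙ B)) (B ⊙ B * (A ⊙ A)) i j := by
  have h₁ := hadamardGeomMean_hadamard_self hA hB
  have h₂ : hadamardGeomMean (B ⊙ B) (A ⊙ A) = A ⊙ B := by
    rw [hadamardGeomMean_hadamard_self hB hA, hadamard_comm]
  rw [sq]
  nth_rw 1 [← h₁, ← h₂]
  exact hadamardGeomMean_mul_apply_le (hadamard_apply_nonneg hA hA) (hadamard_apply_nonneg hB hB)
    (hadamard_apply_nonneg hB hB) (hadamard_apply_nonneg hA hA) i j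

lemma hadamard_pow_two_mul_apply_le (hA : ∀ i j, 0 ≤ A i j) (hB : ∀ i j, 0 ≤ B i j)
    (k : ℕ) (i j : n) :
    ((A ⊙ B) ^ (2 * k)) i j ≤
      hadamardGeomMean ((A ⊙ A * (B ⊙ B)) ^ k) ((B ⊙ B * (A ⊙ A)) ^ k) i j := by
  have hAA := hadamard_apply_nonneg hA hA
  have hBB := hadamard_apply_nonneg hB hB
  rw [pow_mul]
  exact (pow_apply_le_pow_apply (pow_apply_nonneg (hadamard_apply_nonneg hA hB) 2)
    (hadamard_sq_apply_le hA hB) k i j).trans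
    (hadamardGeomMean_pow_apply_le (mul_apply_nonneg hAA hBB) (mul_apply_nonneg hBB hAA) k i j)

section LinftyOpNorm

attribute [local instance] Matrix.linftyOpNormedAddCommGroup

lemma linfty_opNorm_hadamard_pow_two_mul_sq_le (hA : ∀ i j, 0 ≤ A i j)
    (hB : ∀ i j, 0 ≤ B i j) (k : ℕ) :
    ‖(A ⊙ B) ^ (2 * k)‖ ^ 2 ≤ ‖(A ⊙ A * (B ⊙ B)) ^ k‖ * ‖(B ⊙ B * (A ⊙ A)) ^ k‖ := by
  have hAA := hadamard_apply_nonneg hA hA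
  have hBB := hadamard_apply_nonneg hB hB
  have hle : ‖(A ⊙ B) ^ (2 * k)‖ ≤
      ‖hadamardGeomMean ((A ⊙ A * (B ⊙ B)) ^ k) ((B ⊙ B * (A ⊙ A)) ^ k)‖ :=
    linfty_opNorm_mono fun i j => by
      rw [Real.norm_of_nonneg (pow_apply_nonneg (hadamard_apply_nonneg hA hB) _ i j),
        Real.norm_of_nonneg (hadamardGeomMean_nonneg _ _ i j)]
      exact hadamard_pow_two_mul_apply_le hA hB k i j
  exact (pow_le_pow_left₀ (norm_nonneg _) hle 2).trans <|
    linfty_opNorm_hadamardGeomMean_sq_le (pow_apply_nonneg (mul_apply_nonneg hAA hBB) k)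
      (pow_apply_nonneg (mul_apply_nonneg hBB hAA) k)

end LinftyOpNorm

end Hadamard

end Matrix

section MapOfReal

attribute [local instance] Matrix.linftyOpNormedRing Matrix.linftyOpNormedAlgebra

lemma specRad_eq_toReal_spectralRadius {n : ℕ} (X : Matrix (Fin n) (Fin n) ℝ) :
    specRad X = (spectralRadius ℂ (X.map ((↑) : ℝ → ℂ))).toReal :=
  sSup_norm_spectrum_eq_toReal_spectralRadius _

variable {n : Type*} [Fintype n] [DecidableEq n]

lemma spectralRadius_map_ofReal_ne_top (X : Matrix n n ℝ) :
    spectralRadius ℂ (X.map ((↑) : ℝ → ℂ)) ≠ ∞ :=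
  spectralRadius_ne_top _

lemma spectralRadius_map_ofReal_hadamard_sq_le {A B : Matrix n n ℝ} (hA : ∀ i j, 0 ≤ A i j)
    (hB : ∀ i j, 0 ≤ B i j) :
    spectralRadius ℂ ((A ⊙ B).map ((↑) : ℝ → ℂ)) ^ 2 ≤
      spectralRadius ℂ ((A ⊙ A * (B ⊙ B)).map ((↑) : ℝ → ℂ)) := by
  have map_ofReal_pow (X : Matrix n n ℝ) (k : ℕ) : X.map ((↑) : ℝ → ℂ) ^ k = (X ^ k).map (↑) :=
    (Matrix.map_pow X Complex.ofRealHom k).symm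
  have map_ofReal_mul (X Y : Matrix n n ℝ) : (X * Y).map ((↑) : ℝ → ℂ) = X.map (↑) * Y.map (↑) :=
    Matrix.map_mul (f := Complex.ofRealHom)
  have h₄ := spectralRadius_pow_four_le_mul (x := (A ⊙ B).map ((↑) : ℝ → ℂ))
    (c := (A ⊙ A * (B ⊙ B)).map (↑)) (d := (B ⊙ B * (A ⊙ A)).map (↑)) fun k => by
      simp only [map_ofReal_pow, linfty_opNorm_map_ofReal]
      exact linfty_opNorm_hadamard_pow_two_mul_sq_le hA hB k
  rw [map_ofReal_mul (B ⊙ B), spectralRadius_mul_comm, ← map_ofReal_mul, ← sq] at h₄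
  rwa [← ENNReal.pow_le_pow_left_iff two_ne_zero, ← pow_mul]

end MapOfReal

theorem spectral_radius_hadamard_sq_le {n : ℕ} (A B : Matrix (Fin n) (Fin n) ℝ)
    (hA : ∀ i j, 0 ≤ A i j) (hB : ∀ i j, 0 ≤ B i j) :
    specRad (A.hadamard B) ^ 2 ≤ specRad ((A.hadamard A) * (B.hadamard B)) := by
  rw [specRad_eq_toReal_spectralRadius, specRad_eq_toReal_spectralRadius, ← ENNReal.toReal_pow]
  exact ENNReal.toReal_mono (spectralRadius_map_ofReal_ne_top _)
    (spectralRadius_map_ofReal_hadamard_sq_le hA hB)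
end

section
/- For all n×n matrices A and B with non-negative real entries, ρ((A∘A)(B∘B)) ≤ ρ(AB)², where ρ denotes the spectral radius and ∘ the Hadamard product. -/
open Matrix Filter

/-!
Entrywise `0 ≤ ((A ⊙ A) * (B ⊙ B)) ^ k ≤ (A * B) ^ k ⊙ (A * B) ^ k` for every `k`, by induction
on `k` from the Cauchy–Schwarz inequality `∑ x² y² ≤ (∑ x y)²` for nonnegative terms. The same
inequality applied to row sums gives `‖((A ⊙ A) * (B ⊙ B)) ^ k‖ ≤ ‖(A * B) ^ k‖ ^ 2` in the `ℓ∞`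
operator norm, and Gelfand's formula `ρ(X) = lim ‖X ^ k‖ ^ (1 / k)` turns this into the claim.
-/

open scoped ENNReal

namespace Matrix

section Hadamard

variable {R : Type*} [CommSemiring R] [PartialOrder R] [IsOrderedRing R]

theorem mul_apply_nonneg_s2 {l m n : Type*} [Fintype m] {X : Matrix l m R} {Y : Matrix m n R}
    (hX : ∀ i j, 0 ≤ X i j) (hY : ∀ i j, 0 ≤ Y i j) (i : l) (j : n) : 0 ≤ (X * Y) i j :=
  Finset.sum_nonneg fun k _ => mul_nonneg (hX i k) (hY k j)

theorem mul_apply_le_hadamard_self_mul_apply {l m n : Type*} [Fintype m]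
    {X P : Matrix l m R} {Y Q : Matrix m n R}
    (hX : ∀ i j, 0 ≤ X i j) (hY : ∀ i j, 0 ≤ Y i j) (hQ : ∀ i j, 0 ≤ Q i j)
    (hPX : ∀ i j, P i j ≤ (X ⊙ X) i j) (hQY : ∀ i j, Q i j ≤ (Y ⊙ Y) i j) (i : l) (j : n) :
    (P * Q) i j ≤ ((X * Y) ⊙ (X * Y)) i j :=
  calc (P * Q) i j ≤ ∑ k, (X i k * Y k j) ^ 2 :=
        Finset.sum_le_sum fun k _ => (mul_le_mul (hPX i k) (hQY k j) (hQ k j)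
          (mul_nonneg (hX i k) (hX i k))).trans_eq (by rw [hadamard_apply, hadamard_apply]; ring)
    _ ≤ ((X * Y) ⊙ (X * Y)) i j := by
        rw [hadamard_apply, ← sq, mul_apply]
        exact Finset.sum_sq_le_sq_sum_of_nonneg fun k _ => mul_nonneg (hX i k) (hY k j)

theorem pow_apply_le_hadamard_self_pow_apply {n : Type*} [Fintype n] [DecidableEq n]
    {X P : Matrix n n R} (hX : ∀ i j, 0 ≤ X i j) (hP : ∀ i j, 0 ≤ P i j)
    (hPX : ∀ i j, P i j ≤ (X ⊙ X) i j) (k : ℕ) (i j : n) :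
    (P ^ k) i j ≤ ((X ^ k) ⊙ (X ^ k)) i j := by
  induction k generalizing i j with
  | zero => by_cases h : i = j <;> simp [h]
  | succ k ih =>
    rw [pow_succ, pow_succ]
    exact mul_apply_le_hadamard_self_mul_apply (pow_apply_nonneg hX k) hX hP ih hPX i j

end Hadamard

section LinftyOpNorm

attribute [local instance] Matrix.linftyOpNormedAddCommGroup

variable {m n : Type*} [Fintype m] [Fintype n]

theorem linfty_opNNNorm_le_sq_of_le_hadamard_self {P Q : Matrix m n ℝ}
    (hP : ∀ i j, 0 ≤ P i j) (hPQ : ∀ i j, P i j ≤ (Q ⊙ Q) i j) : ‖P‖₊ ≤ ‖Q‖₊ ^ 2 := by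
  rw [linfty_opNNNorm_def, Finset.sup_le_iff]
  intro i _
  calc ∑ j, ‖P i j‖₊ ≤ ∑ j, ‖Q i j‖₊ ^ 2 := Finset.sum_le_sum fun j _ => by
        rw [← NNReal.coe_le_coe]
        simpa [abs_of_nonneg (hP i j), ← sq] using hPQ i j
    _ ≤ (∑ j, ‖Q i j‖₊) ^ 2 := Finset.sum_sq_le_sq_sum_of_nonneg fun _ _ => zero_le
    _ ≤ ‖Q‖₊ ^ 2 := by
        gcongr
        rw [linfty_opNNNorm_def]
        exact Finset.le_sup (f := fun i => ∑ j, ‖Q i j‖₊) (Finset.mem_univ i)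

theorem linfty_opNNNorm_map_ofReal (X : Matrix m n ℝ) :
    ‖X.map ((↑) : ℝ → ℂ)‖₊ = ‖X‖₊ := by
  simp [linfty_opNNNorm_def]

end LinftyOpNorm

end Matrix

theorem spectralRadius_le_pow_of_nnnorm_pow_le {A : Type*} [NormedRing A] [NormedAlgebra ℂ A]
    [CompleteSpace A] {a b : A} (m : ℕ) (h : ∀ k : ℕ, ‖a ^ k‖₊ ≤ ‖b ^ k‖₊ ^ m) :
    spectralRadius ℂ a ≤ spectralRadius ℂ b ^ m := by
  refine le_of_tendsto_of_tendsto' (spectrum.pow_nnnorm_pow_one_div_tendsto_nhds_spectralRadius a)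
    (((ENNReal.continuous_pow m).tendsto _).comp
      (spectrum.pow_nnnorm_pow_one_div_tendsto_nhds_spectralRadius b)) fun k => ?_
  calc (‖a ^ k‖₊ : ℝ≥0∞) ^ (1 / k : ℝ) ≤ ((‖b ^ k‖₊ : ℝ≥0∞) ^ m) ^ (1 / k : ℝ) := by
        gcongr
        exact_mod_cast h k
    _ = ((‖b ^ k‖₊ : ℝ≥0∞) ^ (1 / k : ℝ)) ^ m := by
        rw [← ENNReal.rpow_natCast, ← ENNReal.rpow_natCast, ← ENNReal.rpow_mul,
          ← ENNReal.rpow_mul, mul_comm]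

attribute [local instance] Matrix.linftyOpNormedRing Matrix.linftyOpNormedAlgebra

theorem specRad_nonneg {n : ℕ} (A : Matrix (Fin n) (Fin n) ℝ) : 0 ≤ specRad A :=
  Real.sSup_nonneg fun _ ⟨μ, _, hμ⟩ => hμ ▸ norm_nonneg μ

theorem ofReal_specRad {n : ℕ} (A : Matrix (Fin n) (Fin n) ℝ) :
    ENNReal.ofReal (specRad A) = spectralRadius ℂ (A.map ((↑) : ℝ → ℂ)) := by
  rcases (spectrum ℂ (A.map ((↑) : ℝ → ℂ))).eq_empty_or_nonempty with h | h
  · simp [specRad, spectralRadius, h]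
  obtain ⟨μ, hμ, hμmax⟩ := spectrum.exists_nnnorm_eq_spectralRadius_of_nonempty h
  have hspecRad : specRad A = ‖μ‖ := by
    refine IsGreatest.csSup_eq ⟨⟨μ, hμ, rfl⟩, ?_⟩
    rintro _ ⟨ν, hν, rfl⟩
    have hνμ : (‖ν‖₊ : ℝ≥0∞) ≤ ‖μ‖₊ := hμmax ▸ le_iSup₂ (α := ℝ≥0∞) ν hν
    exact_mod_cast hνμ
  rw [hspecRad, ← hμmax, ofReal_norm, enorm_eq_nnnorm]

theorem spectral_radius_hadamard_sq_prod_le {n : ℕ} (A B : Matrix (Fin n) (Fin n) ℝ)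
    (hA : ∀ i j, 0 ≤ A i j) (hB : ∀ i j, 0 ≤ B i j) :
    specRad ((A.hadamard A) * (B.hadamard B)) ≤ specRad (A * B) ^ 2 := by
  set M := A ⊙ A * (B ⊙ B)
  set C := A * B
  have hBB : ∀ i j, 0 ≤ (B ⊙ B) i j := fun i j => mul_nonneg (hB i j) (hB i j)
  have hM : ∀ i j, 0 ≤ M i j :=
    mul_apply_nonneg_s2 (fun i j => mul_nonneg (hA i j) (hA i j)) hBB
  have hMC : ∀ i j, M i j ≤ (C ⊙ C) i j :=
    mul_apply_le_hadamard_self_mul_apply hA hB hBB (fun _ _ => le_rfl) (fun _ _ => le_rfl)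
  have hC : ∀ i j, 0 ≤ C i j := mul_apply_nonneg_s2 hA hB
  have hnorm (k : ℕ) : ‖M.map ((↑) : ℝ → ℂ) ^ k‖₊ ≤ ‖C.map ((↑) : ℝ → ℂ) ^ k‖₊ ^ 2 := by
    have hmap (X : Matrix (Fin n) (Fin n) ℝ) : X.map ((↑) : ℝ → ℂ) ^ k = (X ^ k).map (↑) :=
      (map_pow Complex.ofRealHom.mapMatrix X k).symm
    rw [hmap, hmap, linfty_opNNNorm_map_ofReal, linfty_opNNNorm_map_ofReal]
    exact linfty_opNNNorm_le_sq_of_le_hadamard_self (pow_apply_nonneg hM k)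
      (pow_apply_le_hadamard_self_pow_apply hC hM hMC k)
  have hρ := spectralRadius_le_pow_of_nnnorm_pow_le 2 hnorm
  rw [← ofReal_specRad, ← ofReal_specRad, ← ENNReal.ofReal_pow (specRad_nonneg C)] at hρ
  exact (ENNReal.ofReal_le_ofReal_iff (by positivity)).1 hρ
end
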